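/- Let Ψ = (E, Δ) be a pure ordered complex satisfying both the quasi-independence axiom and the First Basis Property, and let 𝒥 be an order ideal of the Gale order on the facets. Then the Gale truncation Ψ[𝒥] satisfies the quasi-independence axiom. -/

import Mathlib

variable {α : Type*} [LinearOrder α] [DecidableEq α] [Fintype α]

/-- A (abstract) simplicial complex: a downward closed family of finite sets. -/
def IsComplex (Δ : Finset α → Prop) : Prop :=
  ∀ ⦃s t : Finset α⦄, Δ t → s ⊆ t → Δ s

/-- A simplicial complex with all faces contained in the ground set `E`. -/
def IsComplexOn (E : Finset α) (Δ : Finset α → Prop) : Prop :=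
  (∀ ⦃s⦄, Δ s → s ⊆ E) ∧ IsComplex Δ

/-- A facet (basis): a maximal face. -/
def IsFacet (Δ : Finset α → Prop) (B : Finset α) : Prop :=
  Δ B ∧ ∀ ⦃C⦄, Δ C → B ⊆ C → B = C

/-- A circuit with respect to the ground set `E`: a minimal non-face contained in `E`. -/
def IsCircuitOn (E : Finset α) (Δ : Finset α → Prop) (C : Finset α) : Prop :=
  C ⊆ E ∧ ¬ Δ C ∧ ∀ ⦃D⦄, D ⊂ C → Δ D

/-- A circuit: a minimal non-face. -/
def IsCircuit (Δ : Finset α → Prop) (C : Finset α) : Prop :=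
  ¬ Δ C ∧ ∀ ⦃D⦄, D ⊂ C → Δ D

/-- Purity: all facets have the same cardinality. -/
def IsPure (Δ : Finset α → Prop) : Prop :=
  ∀ ⦃B B'⦄, IsFacet Δ B → IsFacet Δ B' → B.card = B'.card

/-- Lexicographic order on finite sets, comparing sorted element lists:
`B <lex B'` iff the minimum of the symmetric difference lies in `B`. -/
def lexLt (B B' : Finset α) : Prop :=
  ∃ a ∈ B \ B', ∀ b ∈ symmDiff B B', a ≤ b

def lexLe (B B' : Finset α) : Prop := B = B' ∨ lexLt B B'

/-- `B₀` is the lexicographically smallest facet of `Δ`. -/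
def IsLexMinFacet (Δ : Finset α → Prop) (B₀ : Finset α) : Prop :=
  IsFacet Δ B₀ ∧ ∀ ⦃B⦄, IsFacet Δ B → lexLe B₀ B

/-- Gale (componentwise) order: the `i`-th smallest element of `B` is at most
the `i`-th smallest element of `B'`, for all `i` (in particular equal cardinalities). -/
def galeLe (B B' : Finset α) : Prop :=
  List.Forall₂ (· ≤ ·) (Finset.sort B (· ≤ ·)) (Finset.sort B' (· ≤ ·))

/-- Quasi-exchange axiom (without the purity requirement). -/
def QE (Δ : Finset α → Prop) : Prop :=
  ∀ ⦃B₁ B₂⦄, IsFacet Δ B₁ → IsFacet Δ B₂ →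
    ∀ b₁ ∈ B₁ \ B₂, (∀ b ∈ B₂ \ B₁, b < b₁) →
      ∃ b₂ ∈ B₂ \ B₁, IsFacet Δ (insert b₂ (B₁.erase b₁))

/-- Quasi-circuit axiom (with circuits taken relative to the ground set `E`). -/
def QCon (E : Finset α) (Δ : Finset α → Prop) : Prop :=
  ∀ ⦃C₁ C₂⦄, IsCircuitOn E Δ C₁ → IsCircuitOn E Δ C₂ → C₁ ≠ C₂ →
    ∀ c ∈ C₁ ∩ C₂, (∃ m ∈ symmDiff C₁ C₂, c < m) →
      ∃ C₃, IsCircuitOn E Δ C₃ ∧ C₃ ⊆ (C₁ ∪ C₂).erase c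

/-- Quasi-circuit axiom (circuits are arbitrary minimal non-faces). -/
def QC (Δ : Finset α → Prop) : Prop :=
  ∀ ⦃C₁ C₂⦄, IsCircuit Δ C₁ → IsCircuit Δ C₂ → C₁ ≠ C₂ →
    ∀ c ∈ C₁ ∩ C₂, (∃ m ∈ symmDiff C₁ C₂, c < m) →
      ∃ C₃, IsCircuit Δ C₃ ∧ C₃ ⊆ (C₁ ∪ C₂).erase c

/-- `b` is an internally passive element of the facet `B`. -/
def InternallyPassive (Δ : Finset α → Prop) (B : Finset α) (b : α) : Prop :=
  b ∈ B ∧ ∃ b', b' < b ∧ b' ∉ B ∧ IsFacet Δ (insert b' (B.erase b))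

/-- Contraction of a face `I`. -/
def contract (Δ : Finset α → Prop) (I : Finset α) : Finset α → Prop :=
  fun J => Disjoint J I ∧ Δ (J ∪ I)

/-- Quasi-independence axiom: `Δ` is pure and for faces `I₁, I₂` with `|I₁| > |I₂|`,
if `I₁ \ I ⊆ B_{I,0}` for some `I ⊆ I₁ ∩ I₂`, then some `e ∈ I₁ \ I₂` extends `I₂`. -/
def QI (Δ : Finset α → Prop) : Prop :=
  IsPure Δ ∧ ∀ ⦃I₁ I₂ : Finset α⦄, Δ I₁ → Δ I₂ → I₂.card < I₁.card →
    (∃ I, I ⊆ I₁ ∩ I₂ ∧ ∃ B, IsLexMinFacet (contract Δ I) B ∧ I₁ \ I ⊆ B) →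
    ∃ e ∈ I₁ \ I₂, Δ (insert e I₂)

/-- The First Basis Property. -/
inductive FBP : (Finset α → Prop) → Prop
  | rank1 (Δ : Finset α → Prop) (h : ∀ s, Δ s → s.card ≤ 1) : FBP Δ
  | unique (Δ : Finset α → Prop) (B : Finset α) (hB : IsFacet Δ B)
      (hu : ∀ B', IsFacet Δ B' → B' = B) : FBP Δ
  | step (Δ : Finset α → Prop) (B₀ : Finset α) (h₀ : IsLexMinFacet Δ B₀)
      (h1 : ∀ v, Δ {v} → v ∉ B₀ → FBP (contract Δ {v}))
      (h2 : ∀ v, Δ {v} → v ∉ B₀ →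
        ∃ Bv, IsLexMinFacet (contract Δ {v}) Bv ∧ Bv ⊆ B₀) :
      FBP Δ

/-!
Induction along the First Basis Property. The lexicographically first facet `B_{I,0}` of a
contraction `Ψ / I`, with `I` put back, is Gale-below every facet through `I`; hence
`B_{I,0} ∪ I ∈ 𝒥` as soon as `I` is a face of `Ψ[𝒥]`, and `B_{I,0}` is then also the first facet
of `Ψ[𝒥] / I`.
For the exchange, if `I` has a vertex `v` outside the first facet `B₀`, pass to `Ψ / v` and the
ideal `𝒥 / v`. Otherwise `B_{I,0} = B₀ \ I`, so `I₁ ⊆ B₀`. If also `I₂ ⊆ B₀` there is nothing to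
do; else pick `v ∈ I₂ \ B₀`: the first facet of `Ψ / v` is `B₀` minus one element `w`, and the
exchange for `I₁ \ {w}` and `I₂ \ {v}` in `Ψ[𝒥] / v`, relative to the empty face, gives `e`.
-/
open Finset

section GaleOrder

variable {α : Type*} [LinearOrder α]

theorem List.orderedInsert_eq_cons_of_pairwise {x : α} {l : List α}
    (h : (x :: l).Pairwise (· ≤ ·)) : l.orderedInsert (· ≤ ·) x = x :: l := by
  cases l with
  | nil => rfl
  | cons y l =>
    exact List.orderedInsert_cons_of_le _ _ ((List.pairwise_cons.1 h).1 y List.mem_cons_self)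

theorem List.forall₂_orderedInsert {a b : α} {l₁ l₂ : List α}
    (h₁ : l₁.Pairwise (· ≤ ·)) (h₂ : l₂.Pairwise (· ≤ ·)) (hab : a ≤ b)
    (h : Forall₂ (· ≤ ·) l₁ l₂) :
    Forall₂ (· ≤ ·) (l₁.orderedInsert (· ≤ ·) a) (l₂.orderedInsert (· ≤ ·) b) := by
  induction h generalizing a b with
  | nil => exact .cons hab .nil
  | @cons x y l₁ l₂ hxy h ih =>
    have ih' {a b : α} (hab : a ≤ b) := ih h₁.of_cons h₂.of_cons (a := a) (b := b) hab
    simp only [List.orderedInsert_cons]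
    split_ifs with hax hby hby
    · exact .cons hab (.cons hxy h)
    · refine .cons (hax.trans hxy) ?_
      rw [← orderedInsert_eq_cons_of_pairwise h₁]
      exact ih' (hxy.trans (le_of_not_ge hby))
    · refine .cons ((le_of_not_ge hax).trans hab) ?_
      rw [← orderedInsert_eq_cons_of_pairwise h₂]
      exact ih' (hab.trans hby)
    · exact .cons hxy (ih' hab)

theorem galeLe_refl (B : Finset α) : galeLe B B :=
  List.forall₂_same.2 fun x _ => le_refl x

variable [DecidableEq α]

theorem Finset.sort_insert_eq_orderedInsert {a : α} {s : Finset α} (ha : a ∉ s) :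
    sort (insert a s) (· ≤ ·) = (sort s (· ≤ ·)).orderedInsert (· ≤ ·) a := by
  refine List.Perm.eq_of_pairwise' (r := (· ≤ ·)) (pairwise_sort _ _)
    ((pairwise_sort _ _).orderedInsert a _) ?_
  exact (sort_perm_toList _ _).trans ((toList_insert ha).trans
    (((sort_perm_toList _ _).symm.cons a).trans (List.perm_orderedInsert _ a _).symm))

theorem galeLe_insert {a b : α} {X Y : Finset α} (ha : a ∉ X) (hb : b ∉ Y) (hab : a ≤ b)
    (h : galeLe X Y) : galeLe (insert a X) (insert b Y) := by
  rw [galeLe, sort_insert_eq_orderedInsert ha, sort_insert_eq_orderedInsert hb]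
  exact List.forall₂_orderedInsert (pairwise_sort _ _) (pairwise_sort _ _) hab h

end GaleOrder

section LexOrder

variable {α : Type*} [LinearOrder α] [DecidableEq α]

theorem lexLe_antisymm {B C : Finset α} (h : lexLe B C) (h' : lexLe C B) : B = C := by
  rcases h with h | ⟨a, ha, hmin⟩
  · exact h
  rcases h' with h' | ⟨b, hb, hmin'⟩
  · exact h'.symm
  have hab : a = b := le_antisymm (hmin b (mem_symmDiff.2 (Or.inr (mem_sdiff.1 hb))))
    (hmin' a (mem_symmDiff.2 (Or.inr (mem_sdiff.1 ha))))
  exact ((mem_sdiff.1 hb).2 (hab ▸ (mem_sdiff.1 ha).1)).elim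

theorem IsLexMinFacet.unique {Γ : Finset α → Prop} {B B' : Finset α}
    (h : IsLexMinFacet Γ B) (h' : IsLexMinFacet Γ B') : B = B' :=
  lexLe_antisymm (h.2 h'.1) (h'.2 h.1)

theorem lexLe_sdiff {I B C : Finset α} (hIC : I ⊆ C) (h : lexLe B C) :
    lexLe (B \ I) (C \ I) := by
  rcases h with rfl | ⟨a, ha, hmin⟩
  · exact Or.inl rfl
  refine Or.inr ⟨a, ?_, fun b hb => hmin b ?_⟩
  · grind
  · simp only [mem_symmDiff, mem_sdiff] at hb ⊢
    tauto

theorem le_of_lexLe_insert {S : Finset α} {w v : α} (hw : w ∉ S) (hv : v ∉ S)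
    (h : lexLe (insert w S) (insert v S)) : w ≤ v := by
  by_contra! hvw
  rcases h with h | ⟨a, ha, hmin⟩
  · have : w ∈ insert v S := h ▸ mem_insert_self w S
    grind
  · have haw : a = w := by
      simp only [mem_sdiff, mem_insert, not_or] at ha
      tauto
    have hv' : v ∈ symmDiff (insert w S) (insert v S) := by
      simp only [mem_symmDiff, mem_insert]
      grind
    exact (hmin v hv').not_gt (haw ▸ hvw)

end LexOrder

section Contraction

variable {α : Type*} [DecidableEq α] {Γ : Finset α → Prop}

theorem contract_empty (Γ : Finset α → Prop) : contract Γ ∅ = Γ := by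
  ext s
  simp [contract]

theorem contract_contract {I J : Finset α} (h : Disjoint I J) :
    contract (contract Γ I) J = contract Γ (J ∪ I) := by
  ext s
  simp only [contract, disjoint_union_left, disjoint_union_right, union_assoc, h.symm, and_true]
  tauto

theorem contract_contract_erase {I : Finset α} {v : α} (hv : v ∈ I) :
    contract (contract Γ {v}) (I.erase v) = contract Γ I := by
  rw [contract_contract (by simp), union_singleton, insert_erase hv]

theorem contract_singleton_iff {v : α} {s : Finset α} :
    contract Γ {v} s ↔ v ∉ s ∧ Γ (insert v s) := by
  simp only [contract, disjoint_singleton_right, union_singleton]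

theorem contract_singleton_erase {v : α} {s : Finset α} (hv : v ∈ s) :
    contract Γ {v} (s.erase v) ↔ Γ s := by
  simp [contract_singleton_iff, insert_erase hv]

theorem contract_singleton_insert_erase {e v : α} {s : Finset α} (hev : e ≠ v) (hv : v ∈ s) :
    contract Γ {v} (insert e (s.erase v)) ↔ Γ (insert e s) := by
  rw [← erase_insert_of_ne hev, contract_singleton_erase (mem_insert_of_mem hv)]

theorem isComplex_contract (h : IsComplex Γ) (I : Finset α) : IsComplex (contract Γ I) :=
  fun _ _ ⟨hd, ht⟩ hst => ⟨hd.mono_left hst, h ht (union_subset_union_left hst)⟩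

theorem isFacet_contract_iff {I J : Finset α} :
    IsFacet (contract Γ I) J ↔ Disjoint J I ∧ IsFacet Γ (J ∪ I) := by
  constructor
  · rintro ⟨⟨hd, hJ⟩, hmax⟩
    refine ⟨hd, hJ, fun D hD hJD => ?_⟩
    have hID : I ⊆ D := subset_union_right.trans hJD
    have hJD' : J = D \ I := hmax ⟨sdiff_disjoint, by rwa [sdiff_union_of_subset hID]⟩
      fun x hx => mem_sdiff.2 ⟨hJD (mem_union_left _ hx), disjoint_left.1 hd hx⟩
    rw [hJD', sdiff_union_of_subset hID]
  · rintro ⟨hd, hJ, hmax⟩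
    refine ⟨⟨hd, hJ⟩, fun K ⟨hK, hKI⟩ hJK => ?_⟩
    have hJK' := hmax hKI (union_subset_union_left hJK)
    exact hJK.antisymm fun x hx =>
      (mem_union.1 (hJK' ▸ mem_union_left I hx)).resolve_right (disjoint_left.1 hK hx)

theorem isFacet_contract_singleton_iff {v : α} {s : Finset α} :
    IsFacet (contract Γ {v}) s ↔ v ∉ s ∧ IsFacet Γ (insert v s) := by
  simp only [isFacet_contract_iff, disjoint_singleton_right, union_singleton]

theorem IsFacet.erase_contract {C : Finset α} {v : α} (hC : IsFacet Γ C) (hv : v ∈ C) :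
    IsFacet (contract Γ {v}) (C.erase v) :=
  isFacet_contract_singleton_iff.2 ⟨notMem_erase v C, by rwa [insert_erase hv]⟩

theorem isPure_contract (h : IsPure Γ) (I : Finset α) : IsPure (contract Γ I) := by
  intro J J' hJ hJ'
  obtain ⟨hd, hJ⟩ := isFacet_contract_iff.1 hJ
  obtain ⟨hd', hJ'⟩ := isFacet_contract_iff.1 hJ'
  have := h hJ hJ'
  rw [card_union_of_disjoint hd, card_union_of_disjoint hd'] at this
  omega

theorem exists_eq_insert_of_subset (hpure : IsPure Γ) {B₀ B : Finset α} {v : α}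
    (h₀ : IsFacet Γ B₀) (hB : IsFacet (contract Γ {v}) B) (hBB₀ : B ⊆ B₀) :
    ∃ w ∉ B, B₀ = insert w B := by
  obtain ⟨hvB, hB⟩ := isFacet_contract_singleton_iff.1 hB
  have hcard : (B₀ \ B).card = 1 := by
    rw [card_sdiff_of_subset hBB₀, hpure h₀ hB, card_insert_of_notMem hvB]
    omega
  obtain ⟨w, hw⟩ := card_eq_one.1 hcard
  refine ⟨w, fun hwB => ?_, ?_⟩
  · have : w ∈ B₀ \ B := hw ▸ mem_singleton_self w
    exact (mem_sdiff.1 this).2 hwB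
  · rw [← sdiff_union_of_subset hBB₀, hw, insert_eq]

theorem exists_mem_sdiff_insert_subset {I₁ I₂ G : Finset α} (h₁ : I₁ ⊆ G) (h₂ : I₂ ⊆ G)
    (hcard : I₂.card < I₁.card) : ∃ e ∈ I₁ \ I₂, insert e I₂ ⊆ G := by
  obtain ⟨e, he₁, he₂⟩ := exists_mem_notMem_of_card_lt_card hcard
  exact ⟨e, mem_sdiff.2 ⟨he₁, he₂⟩, insert_subset (h₁ he₁) h₂⟩

end Contraction

section LexMinFacet

variable {α : Type*} [LinearOrder α] [DecidableEq α] {Γ : Finset α → Prop}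

theorem IsLexMinFacet.contract_sdiff {B₀ I : Finset α} (h : IsLexMinFacet Γ B₀) (hI : I ⊆ B₀) :
    IsLexMinFacet (contract Γ I) (B₀ \ I) := by
  refine ⟨isFacet_contract_iff.2 ⟨sdiff_disjoint, by rw [sdiff_union_of_subset hI]; exact h.1⟩,
    fun J hJ => ?_⟩
  obtain ⟨hd, hJ⟩ := isFacet_contract_iff.1 hJ
  simpa [union_sdiff_cancel_right hd] using lexLe_sdiff subset_union_right (h.2 hJ)

theorem IsLexMinFacet.subset_of_sdiff_subset {B₀ B I I₁ : Finset α} (h₀ : IsLexMinFacet Γ B₀)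
    (hIB₀ : I ⊆ B₀) (hB : IsLexMinFacet (contract Γ I) B) (hsub : I₁ \ I ⊆ B) : I₁ ⊆ B₀ := by
  rw [hB.unique (h₀.contract_sdiff hIB₀)] at hsub
  intro x hx
  by_cases hxI : x ∈ I
  · exact hIB₀ hxI
  · exact (mem_sdiff.1 (hsub (mem_sdiff.2 ⟨hx, hxI⟩))).1

end LexMinFacet

section GaleMinimality

variable {α : Type*} [LinearOrder α] [DecidableEq α] {Δ : Finset α → Prop}

def LexMinFacetsGaleMin (Δ : Finset α → Prop) : Prop :=
  ∀ ⦃I B C : Finset α⦄, IsLexMinFacet (contract Δ I) B → IsFacet Δ C → I ⊆ C → galeLe (B ∪ I) C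

theorem LexMinFacetsGaleMin.galeLe (h : LexMinFacetsGaleMin Δ) {B C : Finset α}
    (hB : IsLexMinFacet Δ B) (hC : IsFacet Δ C) : galeLe B C := by
  simpa using h (I := ∅) (by rwa [contract_empty]) hC (empty_subset C)

theorem lexMinFacetsGaleMin_of_card_le_one (hpure : IsPure Δ) (h : ∀ s, Δ s → s.card ≤ 1) :
    LexMinFacetsGaleMin Δ := by
  intro I B C hB hC hIC
  rcases I.eq_empty_or_nonempty with rfl | hI
  · rw [contract_empty] at hB
    rw [union_empty]
    have hcard := hpure hB.1 hC
    rcases Nat.le_one_iff_eq_zero_or_eq_one.1 (h B hB.1.1) with hB0 | hB1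
    · rw [card_eq_zero.1 hB0, card_eq_zero.1 (hcard.symm.trans hB0)]
      exact galeLe_refl ∅
    obtain ⟨b, rfl⟩ := card_eq_one.1 hB1
    obtain ⟨c, rfl⟩ := card_eq_one.1 (hcard.symm.trans hB1)
    exact galeLe_insert (notMem_empty b) (notMem_empty c)
      (le_of_lexLe_insert (notMem_empty b) (notMem_empty c) (hB.2 hC)) (galeLe_refl ∅)
  · have heq : ∀ D, Δ D → I ⊆ D → D = I := fun D hD hID =>
      (eq_of_subset_of_card_le hID (by have := h D hD; have := hI.card_pos; omega)).symm
    rw [heq C hC.1 hIC, heq _ (isFacet_contract_iff.1 hB.1).2.1 subset_union_right]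
    exact galeLe_refl I

theorem lexMinFacetsGaleMin_of_unique {B₀ : Finset α} (hu : ∀ B, IsFacet Δ B → B = B₀) :
    LexMinFacetsGaleMin Δ := fun _ _ C hB hC _ => by
  rw [hu _ (isFacet_contract_iff.1 hB.1).2, hu C hC]
  exact galeLe_refl B₀

section Step

variable (hΔ : IsComplex Δ) (hpure : IsPure Δ) {B₀ : Finset α} (h₀ : IsLexMinFacet Δ B₀)
  (hB₀ : ∀ v, Δ {v} → v ∉ B₀ → ∃ Bv, IsLexMinFacet (contract Δ {v}) Bv ∧ Bv ⊆ B₀)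
  (ih : ∀ v, Δ {v} → v ∉ B₀ → LexMinFacetsGaleMin (contract Δ {v}))
include hΔ hpure h₀ hB₀ ih

theorem galeLe_of_fbp_step {C : Finset α} (hC : IsFacet Δ C) : galeLe B₀ C := by
  by_cases hCB₀ : C ⊆ B₀
  · rw [hC.2 h₀.1.1 hCB₀]
    exact galeLe_refl B₀
  obtain ⟨v, hvC, hvB₀⟩ := not_subset.1 hCB₀
  have hv : Δ {v} := hΔ hC.1 (singleton_subset_iff.2 hvC)
  obtain ⟨Bv, hBv, hBvB₀⟩ := hB₀ v hv hvB₀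
  obtain ⟨w, hwBv, rfl⟩ := exists_eq_insert_of_subset hpure h₀.1 hBv.1 hBvB₀
  have hvBv := isFacet_contract_singleton_iff.1 hBv.1
  have hwv : w ≤ v := le_of_lexLe_insert hwBv hvBv.1 (h₀.2 hvBv.2)
  have := galeLe_insert hwBv (notMem_erase v C) hwv
    ((ih v hv hvB₀).galeLe hBv (hC.erase_contract hvC))
  rwa [insert_erase hvC] at this

theorem lexMinFacetsGaleMin_of_fbp_step : LexMinFacetsGaleMin Δ := by
  intro I B C hB hC hIC
  by_cases hIB₀ : I ⊆ B₀
  · rw [hB.unique (h₀.contract_sdiff hIB₀), sdiff_union_of_subset hIB₀]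
    exact galeLe_of_fbp_step hΔ hpure h₀ hB₀ ih hC
  obtain ⟨v, hvI, hvB₀⟩ := not_subset.1 hIB₀
  have hv : Δ {v} := hΔ hC.1 (singleton_subset_iff.2 (hIC hvI))
  have hvB : v ∉ B ∪ I.erase v := by
    simpa [notMem_erase] using disjoint_right.1 (isFacet_contract_iff.1 hB.1).1 hvI
  have := galeLe_insert hvB (notMem_erase v C) le_rfl <| ih v hv hvB₀
    (by rwa [contract_contract_erase hvI]) (hC.erase_contract (hIC hvI)) (erase_subset_erase v hIC)
  rwa [← union_insert, insert_erase hvI, insert_erase (hIC hvI)] at this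

end Step

theorem FBP.lexMinFacetsGaleMin (h : FBP Δ) (hΔ : IsComplex Δ) (hpure : IsPure Δ) :
    LexMinFacetsGaleMin Δ := by
  induction h with
  | rank1 Δ h => exact lexMinFacetsGaleMin_of_card_le_one hpure h
  | unique Δ B _ hu => exact lexMinFacetsGaleMin_of_unique hu
  | step Δ B₀ h₀ _ hB₀ ih =>
    exact lexMinFacetsGaleMin_of_fbp_step hΔ hpure h₀ hB₀ fun v hv hvB₀ =>
      ih v hv hvB₀ (isComplex_contract hΔ {v}) (isPure_contract hpure {v})

end GaleMinimality

section Truncation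

variable {α : Type*}

/-- The Gale truncation `Ψ[𝒥]`. -/
def truncation (𝒥 : Finset α → Prop) : Finset α → Prop :=
  fun s => ∃ B, 𝒥 B ∧ s ⊆ B

def contractFamily [DecidableEq α] (𝒥 : Finset α → Prop) (v : α) : Finset α → Prop :=
  fun X => v ∉ X ∧ 𝒥 (insert v X)

structure IsGaleIdeal [LinearOrder α] (Δ 𝒥 : Finset α → Prop) : Prop where
  isFacet : ∀ B, 𝒥 B → IsFacet Δ B
  mem_of_galeLe : ∀ B B', 𝒥 B → IsFacet Δ B' → galeLe B' B → 𝒥 B'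

variable {Δ 𝒥 : Finset α → Prop}

theorem isComplex_truncation (𝒥 : Finset α → Prop) : IsComplex (truncation 𝒥) :=
  fun _ _ ⟨B, hB, htB⟩ hst => ⟨B, hB, hst.trans htB⟩

theorem truncation_le (hΔ : IsComplex Δ) (h𝒥 : ∀ B, 𝒥 B → IsFacet Δ B) {s : Finset α}
    (hs : truncation 𝒥 s) : Δ s :=
  let ⟨B, hB, hsB⟩ := hs
  hΔ (h𝒥 B hB).1 hsB

theorem isFacet_truncation_iff (h𝒥 : ∀ B, 𝒥 B → IsFacet Δ B) {B : Finset α} :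
    IsFacet (truncation 𝒥) B ↔ 𝒥 B := by
  constructor
  · rintro ⟨⟨C, hC, hBC⟩, hmax⟩
    rwa [hmax ⟨C, hC, subset_rfl⟩ hBC]
  · intro hB
    refine ⟨⟨B, hB, subset_rfl⟩, fun C ⟨D, hD, hCD⟩ hBC => ?_⟩
    have hBD : B = D := (h𝒥 B hB).2 (h𝒥 D hD).1 (hBC.trans hCD)
    exact hBC.antisymm (hBD ▸ hCD)

theorem isPure_truncation (hpure : IsPure Δ) (h𝒥 : ∀ B, 𝒥 B → IsFacet Δ B) :
    IsPure (truncation 𝒥) := fun _ _ hB hB' =>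
  hpure (h𝒥 _ ((isFacet_truncation_iff h𝒥).1 hB)) (h𝒥 _ ((isFacet_truncation_iff h𝒥).1 hB'))

theorem truncation_contractFamily [DecidableEq α] (𝒥 : Finset α → Prop) (v : α) :
    truncation (contractFamily 𝒥 v) = contract (truncation 𝒥) {v} := by
  ext X
  rw [contract_singleton_iff]
  constructor
  · rintro ⟨Y, ⟨hvY, hY⟩, hXY⟩
    exact ⟨fun hvX => hvY (hXY hvX), insert v Y, hY, insert_subset_insert v hXY⟩
  · rintro ⟨hvX, G, hG, hXG⟩
    refine ⟨G.erase v, ⟨notMem_erase v G, by rwa [insert_erase (hXG (mem_insert_self v X))]⟩, ?_⟩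
    rw [← erase_insert hvX]
    exact erase_subset_erase v hXG

variable [LinearOrder α] [DecidableEq α]

theorem IsGaleIdeal.contractFamily (h𝒥 : IsGaleIdeal Δ 𝒥) (v : α) :
    IsGaleIdeal (contract Δ {v}) (contractFamily 𝒥 v) where
  isFacet X hX := isFacet_contract_singleton_iff.2 ⟨hX.1, h𝒥.isFacet _ hX.2⟩
  mem_of_galeLe X Y hX hY hYX := by
    obtain ⟨hvY, hY⟩ := isFacet_contract_singleton_iff.1 hY
    exact ⟨hvY, h𝒥.mem_of_galeLe _ _ hX.2 hY (galeLe_insert hvY hX.1 le_rfl hYX)⟩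

theorem IsGaleIdeal.isLexMinFacet_truncation_contract (h𝒥 : IsGaleIdeal Δ 𝒥)
    (hgale : LexMinFacetsGaleMin Δ) {I B G : Finset α} (hB : IsLexMinFacet (contract Δ I) B)
    (hG : 𝒥 G) (hIG : I ⊆ G) : IsLexMinFacet (contract (truncation 𝒥) I) B := by
  obtain ⟨hd, hBI⟩ := isFacet_contract_iff.1 hB.1
  have hmem : 𝒥 (B ∪ I) := h𝒥.mem_of_galeLe _ _ hG hBI (hgale hB (h𝒥.isFacet _ hG) hIG)
  refine ⟨isFacet_contract_iff.2 ⟨hd, (isFacet_truncation_iff h𝒥.isFacet).2 hmem⟩,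
    fun J hJ => hB.2 ?_⟩
  obtain ⟨hdJ, hJ⟩ := isFacet_contract_iff.1 hJ
  exact isFacet_contract_iff.2 ⟨hdJ, h𝒥.isFacet _ ((isFacet_truncation_iff h𝒥.isFacet).1 hJ)⟩

end Truncation

section Exchange

variable {α : Type*} [LinearOrder α] [DecidableEq α] {Γ : Finset α → Prop}

def QIExchange (Γ : Finset α → Prop) : Prop :=
  ∀ ⦃I I₁ I₂ B : Finset α⦄, Γ I₁ → Γ I₂ → I₂.card < I₁.card → I ⊆ I₁ → I ⊆ I₂ →
    IsLexMinFacet (contract Γ I) B → I₁ \ I ⊆ B → ∃ e ∈ I₁ \ I₂, Γ (insert e I₂)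

theorem qi_of_isPure_of_qiExchange (hpure : IsPure Γ) (hx : QIExchange Γ) : QI Γ :=
  ⟨hpure, fun _ _ h₁ h₂ hcard ⟨_, hI, _, hB, hsub⟩ =>
    hx h₁ h₂ hcard (hI.trans inter_subset_left) (hI.trans inter_subset_right) hB hsub⟩

theorem exists_insert_of_qiExchange_contract {v : α} (hx : QIExchange (contract Γ {v}))
    {I I₁ I₂ B : Finset α} (hvI : v ∈ I) (h₁ : Γ I₁) (h₂ : Γ I₂) (hcard : I₂.card < I₁.card)
    (hI₁ : I ⊆ I₁) (hI₂ : I ⊆ I₂) (hB : IsLexMinFacet (contract Γ I) B) (hsub : I₁ \ I ⊆ B) :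
    ∃ e ∈ I₁ \ I₂, Γ (insert e I₂) := by
  have hvI₂ := hI₂ hvI
  have hcard' : (I₂.erase v).card < (I₁.erase v).card := by
    rw [card_erase_of_mem (hI₁ hvI), card_erase_of_mem hvI₂]
    have := card_pos.2 ⟨v, hvI₂⟩
    omega
  obtain ⟨e, he, hins⟩ := hx (I := I.erase v) (I₁ := I₁.erase v) (I₂ := I₂.erase v)
    ((contract_singleton_erase (hI₁ hvI)).2 h₁) ((contract_singleton_erase hvI₂).2 h₂) hcard'
    (erase_subset_erase v hI₁) (erase_subset_erase v hI₂)
    (by rwa [contract_contract_erase hvI]) (by grind)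
  simp only [mem_sdiff, mem_erase, not_and] at he
  exact ⟨e, mem_sdiff.2 ⟨he.1.2, fun heI₂ => he.2 he.1.1 heI₂⟩,
    (contract_singleton_insert_erase he.1.1 hvI₂).1 hins⟩

theorem exists_insert_of_subset_facet (hΓ : IsComplex Γ) (hpure : IsPure Γ) {B₀ Bv : Finset α}
    {v : α} (h₀ : IsFacet Γ B₀) (hBv : IsLexMinFacet (contract Γ {v}) Bv) (hBvB₀ : Bv ⊆ B₀)
    (hx : QIExchange (contract Γ {v})) {I₁ I₂ : Finset α} (hvI₂ : v ∈ I₂) (h₂ : Γ I₂)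
    (hI₁ : I₁ ⊆ B₀) (hcard : I₂.card < I₁.card) : ∃ e ∈ I₁ \ I₂, Γ (insert e I₂) := by
  obtain ⟨w, -, rfl⟩ := exists_eq_insert_of_subset hpure h₀ hBv.1 hBvB₀
  have hvBv := (isFacet_contract_singleton_iff.1 hBv.1).1
  have hI₁w : I₁.erase w ⊆ Bv := fun x hx => by grind
  have hcard' : (I₂.erase v).card < (I₁.erase w).card := by
    have := pred_card_le_card_erase (s := I₁) (a := w)
    have := card_pos.2 ⟨v, hvI₂⟩
    rw [card_erase_of_mem hvI₂]
    omega
  obtain ⟨e, he, hins⟩ := hx (I := ∅) (I₁ := I₁.erase w) (I₂ := I₂.erase v) (B := Bv)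
    (isComplex_contract hΓ {v} hBv.1.1 hI₁w) ((contract_singleton_erase hvI₂).2 h₂) hcard'
    (empty_subset _) (empty_subset _) (by rwa [contract_empty]) (by rwa [sdiff_empty])
  have hev : e ≠ v := fun hev => hvBv (hev ▸ hI₁w (mem_sdiff.1 he).1)
  simp only [mem_sdiff, mem_erase, not_and] at he
  exact ⟨e, mem_sdiff.2 ⟨he.1.2, fun heI₂ => he.2 hev heI₂⟩,
    (contract_singleton_insert_erase hev hvI₂).1 hins⟩

end Exchange

section TruncationExchange

variable {α : Type*} [LinearOrder α] [DecidableEq α] {Δ : Finset α → Prop}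

theorem qiExchange_truncation_of_fbp_step (hΔ : IsComplex Δ) (hpure : IsPure Δ)
    (hgale : LexMinFacetsGaleMin Δ) {B₀ : Finset α} (h₀ : IsLexMinFacet Δ B₀)
    (hB₀ : ∀ v, Δ {v} → v ∉ B₀ → ∃ Bv, IsLexMinFacet (contract Δ {v}) Bv ∧ Bv ⊆ B₀)
    (ih : ∀ v, Δ {v} → v ∉ B₀ → ∀ 𝒥, IsGaleIdeal (contract Δ {v}) 𝒥 → QIExchange (truncation 𝒥))
    {𝒥 : Finset α → Prop} (h𝒥 : IsGaleIdeal Δ 𝒥) : QIExchange (truncation 𝒥) := by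
  intro I I₁ I₂ B h₁ h₂ hcard hI₁ hI₂ hB hsub
  have ihv : ∀ v, Δ {v} → v ∉ B₀ → QIExchange (contract (truncation 𝒥) {v}) :=
    fun v hv hvB₀ => truncation_contractFamily 𝒥 v ▸ ih v hv hvB₀ _ (h𝒥.contractFamily v)
  have hvertex : ∀ {s v}, truncation 𝒥 s → v ∈ s → Δ {v} := fun hs hv =>
    hΔ (truncation_le hΔ h𝒥.isFacet hs) (singleton_subset_iff.2 hv)
  by_cases hIB₀ : I ⊆ B₀
  swap
  · obtain ⟨v, hvI, hvB₀⟩ := not_subset.1 hIB₀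
    exact exists_insert_of_qiExchange_contract (ihv v (hvertex h₁ (hI₁ hvI)) hvB₀) hvI h₁ h₂
      hcard hI₁ hI₂ hB hsub
  obtain ⟨G₁, hG₁, -⟩ := id h₁
  have hB₀𝒥 : IsLexMinFacet (truncation 𝒥) B₀ := by
    simpa [contract_empty] using
      h𝒥.isLexMinFacet_truncation_contract hgale (by rwa [contract_empty]) hG₁ (empty_subset G₁)
  have hI₁B₀ : I₁ ⊆ B₀ := hB₀𝒥.subset_of_sdiff_subset hIB₀ hB hsub
  by_cases hI₂B₀ : I₂ ⊆ B₀
  · obtain ⟨e, he, heB₀⟩ := exists_mem_sdiff_insert_subset hI₁B₀ hI₂B₀ hcard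
    exact ⟨e, he, isComplex_truncation 𝒥 hB₀𝒥.1.1 heB₀⟩
  obtain ⟨v, hvI₂, hvB₀⟩ := not_subset.1 hI₂B₀
  obtain ⟨G₂, hG₂, hI₂G₂⟩ := id h₂
  have hv := hvertex h₂ hvI₂
  obtain ⟨Bv, hBv, hBvB₀⟩ := hB₀ v hv hvB₀
  have hBvΓ : IsLexMinFacet (contract (truncation 𝒥) {v}) Bv :=
    h𝒥.isLexMinFacet_truncation_contract hgale hBv hG₂ (singleton_subset_iff.2 (hI₂G₂ hvI₂))
  exact exists_insert_of_subset_facet (isComplex_truncation 𝒥) (isPure_truncation hpure h𝒥.isFacet)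
    hB₀𝒥.1 hBvΓ hBvB₀ (ihv v hv hvB₀) hvI₂ h₂ hI₁B₀ hcard

theorem FBP.qiExchange_truncation (h : FBP Δ) (hΔ : IsComplex Δ) (hpure : IsPure Δ)
    {𝒥 : Finset α → Prop} (h𝒥 : IsGaleIdeal Δ 𝒥) : QIExchange (truncation 𝒥) := by
  induction h generalizing 𝒥 with
  | rank1 Δ hΔ1 =>
    rintro - I₁ I₂ - ⟨G₁, hG₁, hI₁G₁⟩ - hcard - - - -
    have hI₂ : I₂ = ∅ := card_eq_zero.1 <| by
      have := (card_le_card hI₁G₁).trans (hΔ1 G₁ (h𝒥.isFacet _ hG₁).1)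
      omega
    obtain ⟨e, he, heG₁⟩ := exists_mem_sdiff_insert_subset hI₁G₁ (hI₂ ▸ empty_subset G₁) hcard
    exact ⟨e, he, G₁, hG₁, heG₁⟩
  | unique Δ B₀ _ hu =>
    rintro - I₁ I₂ - ⟨G₁, hG₁, hI₁G₁⟩ ⟨G₂, hG₂, hI₂G₂⟩ hcard - - - -
    rw [hu G₂ (h𝒥.isFacet _ hG₂), ← hu G₁ (h𝒥.isFacet _ hG₁)] at hI₂G₂
    obtain ⟨e, he, heG₁⟩ := exists_mem_sdiff_insert_subset hI₁G₁ hI₂G₂ hcard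
    exact ⟨e, he, G₁, hG₁, heG₁⟩
  | step Δ B₀ h₀ h₁ hB₀ ih =>
    exact qiExchange_truncation_of_fbp_step hΔ hpure
      ((FBP.step Δ B₀ h₀ h₁ hB₀).lexMinFacetsGaleMin hΔ hpure) h₀ hB₀
      (fun v hv hvB₀ _ => ih v hv hvB₀ (isComplex_contract hΔ {v}) (isPure_contract hpure {v}))
      h𝒥

end TruncationExchange

/-- a Gale truncation of a pure complex satisfying the
quasi-independence axiom and the First Basis Property satisfies the
quasi-independence axiom. -/
theorem stmt19 (E : Finset α) (Δ : Finset α → Prop) (hΔ : IsComplexOn E Δ)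
    (hQI : QI Δ) (hFBP : FBP Δ) (𝒥 : Finset α → Prop)
    (h𝒥 : ∀ B, 𝒥 B → IsFacet Δ B)
    (hdown : ∀ B B', 𝒥 B → IsFacet Δ B' → galeLe B' B → 𝒥 B') :
    QI (fun s => ∃ B, 𝒥 B ∧ s ⊆ B) :=
  qi_of_isPure_of_qiExchange (isPure_truncation hQI.1 h𝒥)
    (hFBP.qiExchange_truncation hΔ.2 hQI.1 ⟨h𝒥, hdown⟩)
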